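/- There exists a group isomorphism between G_1 and G_2, i.e. a bijection φ : G_1 → G_2 satisfying φ(g·g') = φ(g)·φ(g') for all g, g' ∈ G_1 (in particular φ(e_0) = f_0). -/
import Mathlib


open CategoryTheory

/-- A *grouplike* structure on the endomorphism monoid of an object `X` of a category:
the underlying set of `X ⟶ X` is the disjoint union of a group `G` (with identity `e 0`)
and idempotents `e 1, …, e k`, where `e i ≫ e j = e j ≫ e i = e i` for `i ≤ j`,
each `e i` acts as identity on elements of `G`, and `e (Fin.last k)` is the identity
of the monoid.  Composition is written left-to-right (`≫`). -/
structure GrouplikeEnd {C : Type*} [Category C] (X : C) (k : ℕ) where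
  G : Set (X ⟶ X)
  e : Fin (k + 1) → (X ⟶ X)
  mul_mem : ∀ g ∈ G, ∀ g' ∈ G, g ≫ g' ∈ G
  e0_mem : e 0 ∈ G
  e0_comp : ∀ g ∈ G, e 0 ≫ g = g
  comp_e0 : ∀ g ∈ G, g ≫ e 0 = g
  exists_inv : ∀ g ∈ G, ∃ g' ∈ G, g ≫ g' = e 0 ∧ g' ≫ g = e 0
  idem_comp_mem : ∀ i : Fin (k + 1), ∀ g ∈ G, e i ≫ g = g ∧ g ≫ e i = g
  idem_comp_idem : ∀ i j : Fin (k + 1), i ≤ j → e i ≫ e j = e i ∧ e j ≫ e i = e i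
  cover : ∀ m : X ⟶ X, m ∈ G ∨ ∃ i : Fin (k + 1), i ≠ 0 ∧ m = e i
  not_mem_G : ∀ i : Fin (k + 1), i ≠ 0 → e i ∉ G
  e_injective : Function.Injective e
  e_last_eq_id : e (Fin.last k) = 𝟙 X

section Aux

variable {C : Type*} [Category C]

/-- `n`-fold composition power of an endomorphism. -/
private def cpow {X : C} (u : X ⟶ X) : ℕ → (X ⟶ X)
  | 0 => 𝟙 X
  | n + 1 => u ≫ cpow u n

private lemma cpow_succ {X : C} (u : X ⟶ X) (n : ℕ) :
    cpow u (n + 1) = u ≫ cpow u n := rfl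

private lemma cpow_add {X : C} (u : X ⟶ X) (m n : ℕ) :
    cpow u (m + n) = cpow u m ≫ cpow u n := by
  induction m with
  | zero => simp [cpow]
  | succ m ih =>
      rw [Nat.succ_add]
      simp only [cpow_succ, ih, Category.assoc]

private lemma cpow_shuffle {X Y : C} (x : X ⟶ Y) (y : Y ⟶ X) (n : ℕ) :
    cpow (x ≫ y) n ≫ x = x ≫ cpow (y ≫ x) n := by
  induction n with
  | zero => simp [cpow]
  | succ n ih => simp only [cpow_succ, Category.assoc, ih]

private lemma cpow_period {X : C} (u : X ⟶ X) {m n : ℕ} (hmn : m ≤ n)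
    (h : cpow u m = cpow u n) : ∀ k, m ≤ k → cpow u (k + (n - m)) = cpow u k := by
  intro k hk
  have h1 : k + (n - m) = (k - m) + n := by omega
  have h2 : (k - m) + m = k := by omega
  rw [h1, cpow_add, ← h, ← cpow_add, h2]

private lemma cpow_period_mul {X : C} (u : X ⟶ X) {m n : ℕ} (hmn : m ≤ n)
    (h : cpow u m = cpow u n) :
    ∀ j k, m ≤ k → cpow u (k + j * (n - m)) = cpow u k := by
  intro j
  induction j with
  | zero => simp
  | succ j ih =>
      intro k hk
      have he : k + (j + 1) * (n - m) = (k + j * (n - m)) + (n - m) := by ring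
      rw [he, cpow_period u hmn h _ (by omega), ih k hk]

private lemma exists_idem_pow_aux {X : C} (u : X ⟶ X) {m n : ℕ} (hlt : m < n)
    (h : cpow u m = cpow u n) :
    ∃ N, 1 ≤ N ∧ cpow u N ≫ cpow u N = cpow u N := by
  have h1 : 1 ≤ n - m := by omega
  refine ⟨(m + 1) * (n - m), by nlinarith, ?_⟩
  have hk : m ≤ (m + 1) * (n - m) := by nlinarith
  have := cpow_period_mul u hlt.le h (m + 1) ((m + 1) * (n - m)) hk
  rw [cpow_add] at this
  exact this

private lemma exists_idem_pow {X : C} [Finite (X ⟶ X)] (u : X ⟶ X) :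
    ∃ N, 1 ≤ N ∧ cpow u N ≫ cpow u N = cpow u N := by
  obtain ⟨i, j, hij, he⟩ :=
    Finite.exists_ne_map_eq_of_infinite (fun n : ℕ => cpow u n)
  rcases lt_or_gt_of_ne hij with hlt | hlt
  · exact exists_idem_pow_aux u hlt he
  · exact exists_idem_pow_aux u hlt he.symm

private lemma idem_eq_e0 {X : C} {k : ℕ} (GX : GrouplikeEnd X k) {m : X ⟶ X}
    (hm : m ∈ GX.G) (hidem : m ≫ m = m) : m = GX.e 0 := by
  obtain ⟨m', _, _, hmr⟩ := GX.exists_inv m hm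
  calc m = GX.e 0 ≫ m := (GX.e0_comp m hm).symm
    _ = (m' ≫ m) ≫ m := by rw [hmr]
    _ = m' ≫ (m ≫ m) := by rw [Category.assoc]
    _ = m' ≫ m := by rw [hidem]
    _ = GX.e 0 := hmr

private lemma idem_action {X : C} {k : ℕ} (GX : GrouplikeEnd X k) {m : X ⟶ X}
    (hidem : m ≫ m = m) : ∀ g ∈ GX.G, m ≫ g = g ∧ g ≫ m = g := by
  rcases GX.cover m with hm | ⟨i, _, rfl⟩
  · have h0 : m = GX.e 0 := idem_eq_e0 GX hm hidem
    rw [h0]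
    exact fun g hg => ⟨GX.e0_comp g hg, GX.comp_e0 g hg⟩
  · exact fun g hg => GX.idem_comp_mem i g hg

private lemma key {X Y : C} {k₁ k₂ : ℕ} (GX : GrouplikeEnd X k₁) (GY : GrouplikeEnd Y k₂)
    (a : X ⟶ Y) (b : Y ⟶ X)
    (hE : ∀ g ∈ GX.G, (a ≫ b) ≫ g = g ∧ g ≫ (a ≫ b) = g)
    (hF : ∀ h ∈ GY.G, (b ≫ a) ≫ h = h ∧ h ≫ (b ≫ a) = h) :
    b ≫ GX.e 0 ≫ a = GY.e 0 := by
  have e0G := GX.e0_mem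
  have f0G := GY.e0_mem
  have hh : (b ≫ GX.e 0 ≫ a) ≫ (b ≫ GX.e 0 ≫ a) = b ≫ GX.e 0 ≫ a := by
    simp only [Category.assoc]
    rw [reassoc_of% (hE _ e0G).2, reassoc_of% (GX.e0_comp _ e0G)]
  rcases GY.cover (b ≫ GX.e 0 ≫ a) with hG | ⟨l, hl0, hel⟩
  · exact idem_eq_e0 GY hG hh
  · exfalso
    -- t := a ≫ f0 ≫ b, and φ t = f0
    have hphit : b ≫ (a ≫ GY.e 0 ≫ b) ≫ a = GY.e 0 := by
      simp only [Category.assoc]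
      rw [reassoc_of% (hF _ f0G).1, (hF _ f0G).2]
    rcases GX.cover (a ≫ GY.e 0 ≫ b) with htG | ⟨m, hm0, htm⟩
    · -- t ∈ G₁
      obtain ⟨t', ht'G, htt', _⟩ := GX.exists_inv _ htG
      have hcomp : (b ≫ (a ≫ GY.e 0 ≫ b) ≫ a) ≫ (b ≫ t' ≫ a) = b ≫ GX.e 0 ≫ a := by
        simp only [Category.assoc]
        rw [reassoc_of% (hE t' ht'G).1]
        have : (a ≫ GY.e 0 ≫ b) ≫ t' ≫ a = ((a ≫ GY.e 0 ≫ b) ≫ t') ≫ a := by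
          simp only [Category.assoc]
        rw [reassoc_of% htt']
      rw [hphit, hel] at hcomp
      -- hcomp : GY.e 0 ≫ (b ≫ t' ≫ a) = GY.e l
      rcases GY.cover (b ≫ t' ≫ a) with hpG | ⟨p, hp0, hep⟩
      · rw [GY.e0_comp _ hpG] at hcomp
        -- hcomp : b ≫ t' ≫ a = GY.e l, so GY.e l ∈ G₂ and is idempotent
        have hlG : GY.e l ∈ GY.G := hcomp ▸ hpG
        rw [hel] at hh
        have : GY.e l = GY.e 0 := idem_eq_e0 GY hlG hh
        exact hl0 (GY.e_injective this)
      · rw [hep, (GY.idem_comp_idem 0 p (Fin.zero_le p)).1] at hcomp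
        exact hl0 (GY.e_injective hcomp.symm)
    · -- t = e m
      rw [htm] at hphit
      -- hphit : b ≫ GX.e m ≫ a = GY.e 0
      have hcomp : (b ≫ GX.e 0 ≫ a) ≫ (b ≫ GX.e m ≫ a) = b ≫ GX.e 0 ≫ a := by
        simp only [Category.assoc]
        rw [reassoc_of% (hE _ e0G).2,
          reassoc_of% (GX.idem_comp_idem 0 m (Fin.zero_le m)).1]
      rw [hphit, hel, (GY.idem_comp_idem 0 l (Fin.zero_le l)).2] at hcomp
      exact hl0 (GY.e_injective hcomp).symm

private lemma mapsto {X Y : C} {k₁ k₂ : ℕ} (GX : GrouplikeEnd X k₁) (GY : GrouplikeEnd Y k₂)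
    (a : X ⟶ Y) (b : Y ⟶ X)
    (hE : ∀ g ∈ GX.G, (a ≫ b) ≫ g = g ∧ g ≫ (a ≫ b) = g)
    (hF : ∀ h ∈ GY.G, (b ≫ a) ≫ h = h ∧ h ≫ (b ≫ a) = h) :
    ∀ g ∈ GX.G, b ≫ g ≫ a ∈ GY.G := by
  have h0 := key GX GY a b hE hF
  intro g hg
  rcases GY.cover (b ≫ g ≫ a) with hgood | ⟨l, hl0, hel⟩
  · exact hgood
  · exfalso
    have hcomp : (b ≫ GX.e 0 ≫ a) ≫ (b ≫ g ≫ a) = b ≫ g ≫ a := by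
      simp only [Category.assoc]
      rw [reassoc_of% (hE _ GX.e0_mem).2, reassoc_of% (GX.e0_comp g hg)]
    rw [h0, hel, (GY.idem_comp_idem 0 l (Fin.zero_le l)).1] at hcomp
    exact hl0 (GY.e_injective hcomp).symm

end Aux

/-- there is a group isomorphism between `G₁` and `G₂`. -/
theorem stmt_7 {C : Type*} [Category C] (X Y : C) (k₁ k₂ : ℕ)
    [Finite (X ⟶ X)] [Finite (X ⟶ Y)] [Finite (Y ⟶ X)] [Finite (Y ⟶ Y)]
    (hL : Nonempty (X ⟶ Y)) (hR : Nonempty (Y ⟶ X))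
    (GX : GrouplikeEnd X k₁) (GY : GrouplikeEnd Y k₂) :
    ∃ φ : (X ⟶ X) → (Y ⟶ Y),
      Set.BijOn φ GX.G GY.G ∧
      (∀ g ∈ GX.G, ∀ g' ∈ GX.G, φ (g ≫ g') = φ g ≫ φ g') ∧
      φ (GX.e 0) = GY.e 0 := by
  obtain ⟨x⟩ := hL
  obtain ⟨y⟩ := hR
  obtain ⟨N, hN1, hNidem⟩ := exists_idem_pow (x ≫ y)
  have hu2N : cpow (x ≫ y) (2 * N) = cpow (x ≫ y) N := by
    rw [two_mul, cpow_add, hNidem]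
  have hvsucc : ∀ n, cpow (y ≫ x) (n + 1) = y ≫ cpow (x ≫ y) n ≫ x := by
    intro n
    rw [cpow_succ, Category.assoc, ← cpow_shuffle]
  have hv_rel : cpow (y ≫ x) (N + 1) = cpow (y ≫ x) (2 * N + 1) := by
    rw [hvsucc, hvsucc, hu2N]
  have hper := cpow_period (y ≫ x) (show N + 1 ≤ 2 * N + 1 by omega) hv_rel
  have hsub : 2 * N + 1 - (N + 1) = N := by omega
  rw [hsub] at hper
  have hv2N : cpow (y ≫ x) (2 * N) ≫ cpow (y ≫ x) (2 * N) = cpow (y ≫ x) (2 * N) := by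
    have h3 : cpow (y ≫ x) (3 * N) = cpow (y ≫ x) (2 * N) := by
      have := hper (2 * N) (by omega)
      rw [← this]; congr 1; omega
    have h4 : cpow (y ≫ x) (4 * N) = cpow (y ≫ x) (3 * N) := by
      have := hper (3 * N) (by omega)
      rw [← this]; congr 1; omega
    rw [← cpow_add, show 2 * N + 2 * N = 4 * N by ring, h4, h3]
  obtain ⟨P, hP⟩ : ∃ P, 2 * N = P + 1 := ⟨2 * N - 1, by omega⟩
  rw [hP] at hu2N hv2N
  let b : Y ⟶ X := y ≫ cpow (x ≫ y) P
  have hab : x ≫ b = cpow (x ≫ y) (P + 1) := by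
    show x ≫ y ≫ cpow (x ≫ y) P = _
    rw [cpow_succ]
    simp only [Category.assoc]
  have hba : b ≫ x = cpow (y ≫ x) (P + 1) := by
    show (y ≫ cpow (x ≫ y) P) ≫ x = _
    rw [hvsucc]
    simp only [Category.assoc]
  have hEidem : (x ≫ b) ≫ (x ≫ b) = x ≫ b := by
    rw [hab, hu2N, hNidem]
  have hFidem : (b ≫ x) ≫ (b ≫ x) = b ≫ x := by
    rw [hba]; exact hv2N
  have hE := idem_action GX hEidem
  have hF := idem_action GY hFidem
  have hmaps : ∀ g ∈ GX.G, b ≫ g ≫ x ∈ GY.G := mapsto GX GY x b hE hF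
  have hmaps' : ∀ h ∈ GY.G, x ≫ h ≫ b ∈ GX.G := mapsto GY GX b x hF hE
  have linv : ∀ g ∈ GX.G, x ≫ (b ≫ g ≫ x) ≫ b = g := by
    intro g hg
    simp only [Category.assoc]
    rw [reassoc_of% (hE g hg).1]
    exact (hE g hg).2
  have rinv : ∀ h ∈ GY.G, b ≫ (x ≫ h ≫ b) ≫ x = h := by
    intro h hh
    simp only [Category.assoc]
    rw [reassoc_of% (hF h hh).1]
    exact (hF h hh).2
  refine ⟨fun g => b ≫ g ≫ x, ⟨hmaps, ?_, ?_⟩, ?_, key GX GY x b hE hF⟩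
  · intro g hg g' hg' heq
    simp only at heq
    rw [← linv g hg, ← linv g' hg', heq]
  · intro h hh
    exact ⟨x ≫ h ≫ b, hmaps' h hh, rinv h hh⟩
  · intro g hg g' hg'
    simp only [Category.assoc]
    rw [reassoc_of% (hE g' hg').1]
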